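/- There is a universal constant c > 0 such that for every finite metric space (X,d) with at least two points, every chaining functional h of log-concave type, and every probability measure ρ on X, there exists a chaining tree C for (X,d) with val_h(C) ≤ c·max_{x∈X} ∫₀^∞ h(ρ(B(x,r))) dr (the right-hand side being interpreted as +∞ if some ball of positive radius has ρ-measure zero). -/

import Mathlib

open MeasureTheory

noncomputable section

/-- `f` is log-concave on `[0,∞)`. -/
def IsLogConcaveOn (f : ℝ → ℝ) : Prop :=
  ∀ x ∈ Set.Ici (0:ℝ), ∀ y ∈ Set.Ici (0:ℝ), ∀ t ∈ Set.Icc (0:ℝ) 1,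
    f x ^ t * f y ^ (1 - t) ≤ f (t * x + (1 - t) * y)

/-- `f` is a continuous, non-increasing, log-concave probability density on `[0,∞)`
normalized so that `f 0 = 1`. -/
structure IsChainingDensity (f : ℝ → ℝ) : Prop where
  nonneg : ∀ t : ℝ, 0 ≤ t → 0 ≤ f t
  continuousOn : ContinuousOn f (Set.Ici 0)
  antitoneOn : AntitoneOn f (Set.Ici 0)
  logConcave : IsLogConcaveOn f
  total : (∫ t in Set.Ioi (0:ℝ), f t) = 1
  normalized : f 0 = 1

/-- The complementary cumulative distribution function `F(s) = ∫_s^∞ f(t) dt`. -/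
def ccdf (f : ℝ → ℝ) (s : ℝ) : ℝ := ∫ t in Set.Ioi s, f t

/-- The chaining functional `h(p) = F⁻¹(p)`, defined on `(0,1]` as the least
`s ≥ 0` with `F(s) ≤ p`. -/
def chainFn (f : ℝ → ℝ) (p : ℝ) : ℝ := sInf {s : ℝ | 0 ≤ s ∧ ccdf f s ≤ p}

open scoped ENNReal

/-- The extended (`[0,∞]`-valued) chaining functional: `h(p)` is the least `s ≥ 0`
with `F(s) ≤ p`, and `+∞` when no such `s` exists (in particular
`h(0) = lim_{p→0⁺} h(p) ∈ (0,∞]`). -/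
def chainFnE (f : ℝ → ℝ) (p : ℝ) : ℝ≥0∞ :=
  sInf {t : ℝ≥0∞ | ∃ s : ℝ, 0 ≤ s ∧ ccdf f s ≤ p ∧ t = ENNReal.ofReal s}

/-- A probability measure on a finite set, given by its point masses. -/
def IsProbOn {X : Type*} [Fintype X] (μ : X → ℝ) : Prop :=
  (∀ x, 0 ≤ μ x) ∧ (∑ x, μ x) = 1

/-- The mass `μ(B(x,r))` of the closed ball of radius `r` around `x`. -/
def ballMass {X : Type*} [MetricSpace X] [Fintype X] (μ : X → ℝ) (x : X) (r : ℝ) : ℝ :=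
  ∑ y ∈ Finset.univ.filter (fun y => dist x y ≤ r), μ y

/-- `∫₀^∞ h(μ(B(x,r))) dr`, valued in `[0,∞]`. -/
def Hint {X : Type*} [MetricSpace X] [Fintype X] (f : ℝ → ℝ) (μ : X → ℝ) (x : X) : ℝ≥0∞ :=
  ∫⁻ r in Set.Ioi (0:ℝ), chainFnE f (ballMass μ x r)

/-- The diameter of the finite metric space `X`. -/
def fdiam (X : Type*) [MetricSpace X] : ℝ := Metric.diam (Set.univ : Set X)

/-- The sum of the edge labels of a rooted spanning tree described by a parent
function (one edge per non-root vertex). -/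
def edgeLabelSum {X : Type*} [Fintype X] (root : X) (prob : X → ℝ) : ℝ :=
  letI := Classical.decEq X
  ∑ x ∈ Finset.univ.erase root, prob x

/-- A chaining tree on the finite metric space `X`: a rooted spanning tree on `X`
(described by a parent function), together with probability labels
`p_e ∈ (0,1/2]` on the edges `e = {x, parent x}` (`x ≠ root`) summing to at most
`1/2`. -/
structure ChainingTree (X : Type*) [MetricSpace X] [Fintype X] where
  root : X
  parent : X → X
  prob : X → ℝ
  parent_root : parent root = root
  reaches_root : ∀ x : X, ∃ n : ℕ, parent^[n] x = root
  prob_mem : ∀ x : X, x ≠ root → prob x ∈ Set.Ioc (0:ℝ) (1/2)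
  prob_sum : edgeLabelSum root prob ≤ 1/2

/-- The length `l_e = d(u,v)·h(p_e)` of the parent edge at `x` (zero at the root). -/
def edgeLen {X : Type*} [MetricSpace X] [Fintype X] (f : ℝ → ℝ)
    (C : ChainingTree X) (x : X) : ℝ :=
  dist x (C.parent x) * chainFn f (C.prob x)

/-- The total length `Σ_{e ∈ P_x} l_e` of the path from `x` to the root (the path
reaches the root within `|X|` steps, and the root's term is `0`). -/
def pathLen {X : Type*} [MetricSpace X] [Fintype X] (f : ℝ → ℝ)
    (C : ChainingTree X) (x : X) : ℝ :=
  ∑ n ∈ Finset.range (Fintype.card X), edgeLen f C (C.parent^[n] x)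

/-- The value `val_h(C) = max_{x∈X} Σ_{e ∈ P_x} l_e` of a chaining tree. -/
def ctVal {X : Type*} [MetricSpace X] [Fintype X] (f : ℝ → ℝ)
    (C : ChainingTree X) : ℝ :=
  ⨆ x : X, pathLen f C x

/-!
The tree comes from a greedy multiscale partition.  A cluster `C ⊆ B(u, 4r)` keeps its core
`C ∩ B(u, 2r)` and cuts the rest into pieces `C ∩ B(v, 2r)` around points `v` whose ball `B(v, r)`
is heaviest; each piece is recursively a cluster of radius `r / 2` hanging below `u` by an edge
with label `w q`, where `q ≈ ρ(B(v, r))`.  The chosen balls `B(v, r)` are disjoint, so the labels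
add up to at most `1/2`.

Log-concavity of `f` gives `F(s + t) ≤ F(s) F(t)`, i.e. `h(pq) ≤ h(p) + h(q)`.  Hence the label
cost along a path splits into terms `h(1/2)`, which contribute a geometric series dominated by
`diam X · h(1/2)`, and terms `h(ρ(B(v, r)))`, each dominated by `(2/r) ∫_{r/2}^{r} h(ρ(B(x, s))) ds`
because `v` is heavier than the point `x` of its piece.  Finally `diam X · h(1/2)` is at most
twice `∫₀^∞ h(ρ(B(z, s))) ds` for a point `z` whose balls of radius `< diam X / 2` have mass at
most `1/2`.
-/

open Set

theorem IsLogConcaveOn.mul_le_mul_of_add_eq {f : ℝ → ℝ} (hf : IsLogConcaveOn f)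
    (h0 : ∀ t, 0 ≤ t → 0 ≤ f t) {a b c d : ℝ} (ha : 0 ≤ a) (hab : a ≤ b) (hac : a ≤ c)
    (hsum : a + d = b + c) : f a * f d ≤ f b * f c := by
  have hd : 0 ≤ d := by linarith
  obtain rfl | had := (show a ≤ d by linarith).eq_or_lt
  · obtain rfl : b = a := by linarith
    obtain rfl : c = b := by linarith
    rfl
  -- `b` and `c` are the convex combinations of `a` and `d` with weights `l` and `1 - l`
  set l := (d - b) / (d - a)
  have hl0 : 0 ≤ l := div_nonneg (by linarith) (by linarith)
  have hl1 : l ≤ 1 := (div_le_one (by linarith)).2 (by linarith)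
  have hb : l * a + (1 - l) * d = b := by
    simp only [l]; field_simp; ring
  have hc : (1 - l) * a + (1 - (1 - l)) * d = c := by
    simp only [l]; field_simp; linear_combination (d - a) * hsum
  have H1 := hf a ha d hd l ⟨hl0, hl1⟩
  have H2 := hf a ha d hd (1 - l) ⟨by linarith, by linarith⟩
  rw [hb] at H1
  rw [hc] at H2
  calc f a * f d = (f a ^ l * f d ^ (1 - l)) * (f a ^ (1 - l) * f d ^ (1 - (1 - l))) := by
        rw [mul_mul_mul_comm, ← Real.rpow_add' (h0 a ha) (by norm_num),
          ← Real.rpow_add' (h0 d hd) (by norm_num)]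
        norm_num
    _ ≤ f b * f c := mul_le_mul H1 H2
          (mul_nonneg (Real.rpow_nonneg (h0 a ha) _) (Real.rpow_nonneg (h0 d hd) _))
          (h0 b (by linarith))

theorem setIntegral_Ioi_comp_add (g : ℝ → ℝ) (s t : ℝ) :
    ∫ x in Ioi t, g (x + s) = ccdf g (t + s) := by
  rw [ccdf, ← (measurePreserving_add_right volume s).setIntegral_preimage_emb
    (measurableEmbedding_addRight s) g, preimage_add_const_Ioi, add_sub_cancel_right]

namespace IsChainingDensity

variable {f : ℝ → ℝ}

theorem le_one (hf : IsChainingDensity f) {t : ℝ} (ht : 0 ≤ t) : f t ≤ 1 :=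
  hf.normalized ▸ hf.antitoneOn self_mem_Ici ht ht

theorem integrableOn_Ioi (hf : IsChainingDensity f) {s : ℝ} (hs : 0 ≤ s) :
    IntegrableOn f (Ioi s) := by
  have : IntegrableOn f (Ioi 0) := by
    by_contra h
    simpa [integral_undef h] using hf.total
  exact this.mono_set (Ioi_subset_Ioi hs)

theorem ccdf_eq_add (hf : IsChainingDensity f) {s t : ℝ} (hs : 0 ≤ s) (hst : s ≤ t) :
    ccdf f s = (∫ x in Ioc s t, f x) + ccdf f t := by
  rw [ccdf, ← Ioc_union_Ioi_eq_Ioi hst, setIntegral_union (Ioc_disjoint_Ioi le_rfl)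
    measurableSet_Ioi ((hf.integrableOn_Ioi hs).mono_set Ioc_subset_Ioi_self)
    (hf.integrableOn_Ioi (hs.trans hst)), ccdf]

theorem ccdf_nonneg (hf : IsChainingDensity f) {s : ℝ} (hs : 0 ≤ s) : 0 ≤ ccdf f s :=
  setIntegral_nonneg measurableSet_Ioi fun x hx => hf.nonneg x (hs.trans (le_of_lt hx))

theorem integral_Ioc_nonneg (hf : IsChainingDensity f) {s t : ℝ} (hs : 0 ≤ s) :
    0 ≤ ∫ x in Ioc s t, f x :=
  setIntegral_nonneg measurableSet_Ioc fun x hx => hf.nonneg x (hs.trans hx.1.le)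

theorem lipschitzOnWith_ccdf (hf : IsChainingDensity f) :
    LipschitzOnWith 1 (ccdf f) (Ici 0) := by
  -- on `[s, t]` the density lies in `[0, 1]`
  have key : ∀ s t, 0 ≤ s → s ≤ t → 0 ≤ ccdf f s - ccdf f t ∧ ccdf f s - ccdf f t ≤ t - s := by
    intro s t hs hst
    have hle : (∫ x in Ioc s t, f x) ≤ ∫ x in Ioc s t, (1 : ℝ) :=
      setIntegral_mono_on ((hf.integrableOn_Ioi hs).mono_set Ioc_subset_Ioi_self)
        (integrableOn_const measure_Ioc_lt_top.ne) measurableSet_Ioc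
        fun x hx => hf.le_one (hs.trans hx.1.le)
    rw [setIntegral_const, Real.volume_real_Ioc_of_le hst, smul_eq_mul, mul_one] at hle
    rw [hf.ccdf_eq_add hs hst]
    exact ⟨by linarith [hf.integral_Ioc_nonneg (t := t) hs], by linarith⟩
  refine LipschitzOnWith.mk_one fun s hs t ht => ?_
  rw [Real.dist_eq, Real.dist_eq]
  rcases le_total s t with hst | hst
  · obtain ⟨h1, h2⟩ := key s t hs hst
    rw [abs_of_nonneg h1, abs_of_nonpos (by linarith)]
    linarith
  · obtain ⟨h1, h2⟩ := key t s ht hst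
    rw [abs_of_nonpos (by linarith), abs_of_nonneg (by linarith)]
    linarith

theorem exists_ccdf_le (hf : IsChainingDensity f) {p : ℝ} (hp : 0 < p) :
    ∃ s, 0 ≤ s ∧ ccdf f s ≤ p := by
  have hlim := intervalIntegral_tendsto_integral_Ioi 0 (hf.integrableOn_Ioi le_rfl)
    Filter.tendsto_id
  rw [hf.total] at hlim
  obtain ⟨b, hb, hb0⟩ := ((hlim.eventually (eventually_gt_nhds (by linarith : 1 - p < 1))).and
    (Filter.eventually_ge_atTop 0)).exists
  refine ⟨b, hb0, ?_⟩
  have := hf.ccdf_eq_add le_rfl hb0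
  rw [ccdf, hf.total] at this
  rw [id, intervalIntegral.integral_of_le hb0] at hb
  linarith

theorem integrableOn_comp_add (hf : IsChainingDensity f) {s : ℝ} (hs : 0 ≤ s) :
    IntegrableOn (fun x => f (x + s)) (Ioi 0) := by
  have := (measurePreserving_add_right volume s).integrableOn_comp_preimage
    (measurableEmbedding_addRight s) (f := f) (s := Ioi (0 + s))
  rw [preimage_add_const_Ioi, add_sub_cancel_right] at this
  exact this.2 (hf.integrableOn_Ioi (by linarith))

/-- For `y ≤ t < x`, log-concavity gives `f (x + s) f y ≤ f x f (y + s)`; integrate. -/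
theorem integral_comp_add_mul_le (hf : IsChainingDensity f) {s t : ℝ} (hs : 0 ≤ s)
    (ht : 0 ≤ t) : (∫ x in Ioi t, f (x + s)) * (∫ y in Ioc 0 t, f y) ≤
      (∫ x in Ioi t, f x) * (∫ y in Ioc 0 t, f (y + s)) := by
  rw [← setIntegral_prod_mul, ← setIntegral_prod_mul]
  refine setIntegral_mono_on ?_ ?_ (measurableSet_Ioi.prod measurableSet_Ioc) ?_
  · rw [IntegrableOn, ← Measure.prod_restrict]
    exact ((hf.integrableOn_comp_add hs).mono_set (Ioi_subset_Ioi ht)).mul_prod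
      ((hf.integrableOn_Ioi le_rfl).mono_set Ioc_subset_Ioi_self)
  · rw [IntegrableOn, ← Measure.prod_restrict]
    exact (hf.integrableOn_Ioi ht).mul_prod
      ((hf.integrableOn_comp_add hs).mono_set Ioc_subset_Ioi_self)
  · rintro ⟨x, y⟩ ⟨hx, hy⟩
    simp only [mem_Ioi, mem_Ioc] at hx hy
    have := hf.logConcave.mul_le_mul_of_add_eq hf.nonneg hy.1.le (hy.2.trans hx.le)
      (by linarith : y ≤ y + s) (by ring : y + (x + s) = x + (y + s))
    linarith

theorem ccdf_add_le_mul (hf : IsChainingDensity f) {s t : ℝ} (hs : 0 ≤ s) (ht : 0 ≤ t) :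
    ccdf f (s + t) ≤ ccdf f s * ccdf f t := by
  have hg := hf.integrableOn_comp_add hs
  have hFst : ∫ x in Ioi t, f (x + s) = ccdf f (s + t) := by
    rw [setIntegral_Ioi_comp_add, add_comm]
  have hFs : ccdf f s = (∫ x in Ioc 0 t, f (x + s)) + ∫ x in Ioi t, f (x + s) := by
    rw [← setIntegral_union (Ioc_disjoint_Ioi le_rfl) measurableSet_Ioi
      (hg.mono_set Ioc_subset_Ioi_self) (hg.mono_set (Ioi_subset_Ioi ht)),
      Ioc_union_Ioi_eq_Ioi ht, setIntegral_Ioi_comp_add, zero_add]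
  have hF0 : 1 = (∫ x in Ioc 0 t, f x) + ccdf f t := hf.total ▸ hf.ccdf_eq_add le_rfl ht
  calc ccdf f (s + t) = (∫ x in Ioi t, f (x + s)) * ((∫ x in Ioc 0 t, f x) + ccdf f t) := by
        rw [← hF0, hFst, mul_one]
    _ ≤ ccdf f t * (∫ y in Ioc 0 t, f (y + s)) + (∫ x in Ioi t, f (x + s)) * ccdf f t := by
        rw [mul_add]; exact add_le_add_left (hf.integral_comp_add_mul_le hs ht) _
    _ = ccdf f s * ccdf f t := by rw [hFs]; ring

end IsChainingDensity

section ChainingFunctional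

variable {f : ℝ → ℝ}

theorem chainFn_nonneg (f : ℝ → ℝ) (p : ℝ) : 0 ≤ chainFn f p :=
  Real.sInf_nonneg fun _ hs => hs.1

theorem chainFn_le_of_ccdf_le {p s : ℝ} (hs : 0 ≤ s) (h : ccdf f s ≤ p) : chainFn f p ≤ s :=
  csInf_le ⟨0, fun _ hx => hx.1⟩ ⟨hs, h⟩

theorem IsChainingDensity.ccdf_chainFn_le (hf : IsChainingDensity f) {p : ℝ} (hp : 0 < p) :
    ccdf f (chainFn f p) ≤ p := by
  have hclosed : IsClosed {s : ℝ | 0 ≤ s ∧ ccdf f s ≤ p} :=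
    hf.lipschitzOnWith_ccdf.continuousOn.preimage_isClosed_of_isClosed isClosed_Ici isClosed_Iic
  exact (hclosed.csInf_mem (hf.exists_ccdf_le hp) ⟨0, fun _ hs => hs.1⟩).2

theorem IsChainingDensity.chainFn_le_chainFn (hf : IsChainingDensity f) {p q : ℝ} (hp : 0 < p)
    (hpq : p ≤ q) : chainFn f q ≤ chainFn f p :=
  chainFn_le_of_ccdf_le (chainFn_nonneg f p) ((hf.ccdf_chainFn_le hp).trans hpq)

theorem IsChainingDensity.chainFn_mul_le (hf : IsChainingDensity f) {p q : ℝ} (hp : 0 < p)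
    (hq : 0 < q) : chainFn f (p * q) ≤ chainFn f p + chainFn f q := by
  refine chainFn_le_of_ccdf_le (add_nonneg (chainFn_nonneg f p) (chainFn_nonneg f q)) ?_
  calc ccdf f (chainFn f p + chainFn f q) ≤ ccdf f (chainFn f p) * ccdf f (chainFn f q) :=
        hf.ccdf_add_le_mul (chainFn_nonneg f p) (chainFn_nonneg f q)
    _ ≤ p * q := mul_le_mul (hf.ccdf_chainFn_le hp) (hf.ccdf_chainFn_le hq)
        (hf.ccdf_nonneg (chainFn_nonneg f q)) hp.le

theorem IsChainingDensity.chainFn_div_eight_le (hf : IsChainingDensity f) {p : ℝ} (hp : 0 < p) :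
    chainFn f (p / 8) ≤ chainFn f p + 3 * chainFn f (1 / 2) := by
  have half : ∀ q, 0 < q → chainFn f (q * (1 / 2)) ≤ chainFn f q + chainFn f (1 / 2) :=
    fun q hq => hf.chainFn_mul_le hq (by norm_num)
  have h1 := half p hp
  have h2 := half _ (by positivity : 0 < p * (1 / 2))
  have h3 := half _ (by positivity : 0 < p * (1 / 2) * (1 / 2))
  rw [show p * (1 / 2) * (1 / 2) * (1 / 2) = p / 8 by ring] at h3
  linarith

theorem ofReal_chainFn_le_chainFnE (f : ℝ → ℝ) {p q : ℝ} (hqp : q ≤ p) :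
    ENNReal.ofReal (chainFn f p) ≤ chainFnE f q :=
  le_sInf fun _ ⟨_, hs, hsq, hts⟩ =>
    hts ▸ ENNReal.ofReal_le_ofReal (chainFn_le_of_ccdf_le hs (hsq.trans hqp))

theorem chainFnE_anti (f : ℝ → ℝ) {p q : ℝ} (hpq : p ≤ q) : chainFnE f q ≤ chainFnE f p :=
  sInf_le_sInf fun _ ⟨s, hs, hsq, hts⟩ => ⟨s, hs, hsq.trans hpq, hts⟩

/-- The extended `chainFnE` is needed on the right: `chainFn f 0` is a junk value. -/
theorem IsChainingDensity.ofReal_chainFn_le (hf : IsChainingDensity f) {q m : ℝ} (hq : 0 < q)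
    (hm : 0 ≤ m) (hmq : m ≤ 8 * q) :
    ENNReal.ofReal (chainFn f q) ≤ 3 * ENNReal.ofReal (chainFn f (1 / 2)) + chainFnE f m := by
  obtain rfl | hm := hm.eq_or_lt
  · exact (ofReal_chainFn_le_chainFnE f hq.le).trans le_add_self
  calc ENNReal.ofReal (chainFn f q)
      ≤ ENNReal.ofReal (3 * chainFn f (1 / 2) + chainFn f m) := by
        refine ENNReal.ofReal_le_ofReal ?_
        linarith [hf.chainFn_le_chainFn (by positivity : 0 < m / 8) (by linarith : m / 8 ≤ q),
          hf.chainFn_div_eight_le hm]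
    _ = 3 * ENNReal.ofReal (chainFn f (1 / 2)) + ENNReal.ofReal (chainFn f m) := by
        rw [ENNReal.ofReal_add (mul_nonneg (by norm_num) (chainFn_nonneg f _)) (chainFn_nonneg f m),
          ENNReal.ofReal_mul (by norm_num), ENNReal.ofReal_ofNat]
    _ ≤ _ := by gcongr; exact ofReal_chainFn_le_chainFnE f le_rfl

theorem IsChainingDensity.ofReal_chainFn_div_eight_le (hf : IsChainingDensity f) {p : ℝ}
    (hp : 0 < p) : ENNReal.ofReal (chainFn f (p / 8)) ≤
      ENNReal.ofReal (chainFn f p) + 3 * ENNReal.ofReal (chainFn f (1 / 2)) := by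
  rw [← ENNReal.ofReal_ofNat 3, ← ENNReal.ofReal_mul (by norm_num),
    ← ENNReal.ofReal_add (chainFn_nonneg f p) (by linarith [chainFn_nonneg f (1 / 2)])]
  exact ENNReal.ofReal_le_ofReal (hf.chainFn_div_eight_le hp)

theorem IsChainingDensity.ofReal_chainFn_mul_le (hf : IsChainingDensity f) {p q : ℝ}
    (hp : 0 < p) (hq : 0 < q) : ENNReal.ofReal (chainFn f (p * q)) ≤
      ENNReal.ofReal (chainFn f p) + ENNReal.ofReal (chainFn f q) := by
  rw [← ENNReal.ofReal_add (chainFn_nonneg f p) (chainFn_nonneg f q)]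
  exact ENNReal.ofReal_le_ofReal (hf.chainFn_mul_le hp hq)

end ChainingFunctional

theorem const_mul_le_setLIntegral {α : Type*} [MeasurableSpace α] {μ : Measure α} {s : Set α}
    (hs : MeasurableSet s) {c : ℝ≥0∞} {g : α → ℝ≥0∞} (h : ∀ x ∈ s, c ≤ g x) :
    c * μ s ≤ ∫⁻ x in s, g x ∂μ :=
  (setLIntegral_const s c).symm.le.trans (setLIntegral_mono' hs h)

section BallMass

variable {X : Type*} [MetricSpace X] [Fintype X] {f : ℝ → ℝ} {ρ : X → ℝ} {v : X} {r : ℝ}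

theorem ballMass_nonneg (hρ : ∀ y, 0 ≤ ρ y) (x : X) (r : ℝ) : 0 ≤ ballMass ρ x r :=
  Finset.sum_nonneg fun y _ => hρ y

theorem ballMass_mono (hρ : ∀ y, 0 ≤ ρ y) (x : X) : Monotone (ballMass ρ x) :=
  fun _ _ hrs => Finset.sum_le_sum_of_subset_of_nonneg
    (fun _ hy => by simp only [Finset.mem_filter] at hy ⊢; exact ⟨hy.1, hy.2.trans hrs⟩)
    fun y _ _ => hρ y

theorem ballMass_le_one (hρ : IsProbOn ρ) (x : X) (r : ℝ) : ballMass ρ x r ≤ 1 :=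
  hρ.2 ▸ Finset.sum_le_sum_of_subset_of_nonneg (Finset.subset_univ _) fun y _ _ => hρ.1 y

theorem setLIntegral_Ioc_le_Hint (f : ℝ → ℝ) (ρ : X → ℝ) (x : X) (r : ℝ) :
    ∫⁻ s in Ioc 0 r, chainFnE f (ballMass ρ x s) ≤ Hint f ρ x :=
  lintegral_mono_set Ioc_subset_Ioi_self

def heaviest (ρ : X → ℝ) (r : ℝ) (C : Finset X) (hC : C.Nonempty) : X :=
  (C.exists_max_image (ballMass ρ · r) hC).choose

theorem heaviest_mem (ρ : X → ℝ) (r : ℝ) {C : Finset X} (hC : C.Nonempty) :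
    heaviest ρ r C hC ∈ C :=
  (C.exists_max_image (ballMass ρ · r) hC).choose_spec.1

theorem ballMass_le_heaviest (ρ : X → ℝ) (r : ℝ) {C : Finset X} (hC : C.Nonempty) :
    ∀ y ∈ C, ballMass ρ y r ≤ ballMass ρ (heaviest ρ r C hC) r :=
  (C.exists_max_image (ballMass ρ · r) hC).choose_spec.2

/-- The label factor of a piece `D` with centre `v`; the term `#D / |X|` keeps it positive when
`ρ(B(v, r)) = 0`. -/
def pieceWeight (ρ : X → ℝ) (r : ℝ) (v : X) (D : Finset X) : ℝ :=
  (ballMass ρ v r + D.card / Fintype.card X) / 8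

theorem pieceWeight_pos (hρ : ∀ y, 0 ≤ ρ y) {D : Finset X} (hD : D.Nonempty) :
    0 < pieceWeight ρ r v D := by
  have : (0 : ℝ) < D.card := by exact_mod_cast hD.card_pos
  have : (0 : ℝ) < Fintype.card X := by exact_mod_cast Fintype.card_pos_iff.2 ⟨v⟩
  have := ballMass_nonneg hρ v r
  unfold pieceWeight
  positivity

theorem pieceWeight_le_one (hρ : IsProbOn ρ) (D : Finset X) : pieceWeight ρ r v D ≤ 1 := by
  have : (D.card : ℝ) / Fintype.card X ≤ 1 :=
    div_le_one_of_le₀ (by exact_mod_cast Finset.card_le_univ _) (Nat.cast_nonneg _)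
  unfold pieceWeight
  linarith [ballMass_le_one hρ v r]

theorem ballMass_le_pieceWeight (D : Finset X) : ballMass ρ v r ≤ 8 * pieceWeight ρ r v D := by
  unfold pieceWeight
  linarith [show (0 : ℝ) ≤ D.card / Fintype.card X by positivity]

/-- Applied to a heaviest centre `v`: the label cost `h(ρ(B(v, r)))` of the edge above a piece is
paid by the integral at any point `x` of the piece. -/
theorem ofReal_half_mul_chainFnE_le (hρ : ∀ y, 0 ≤ ρ y) {x : X}
    (hxv : ballMass ρ x r ≤ ballMass ρ v r) :
    ENNReal.ofReal (r / 2) * chainFnE f (ballMass ρ v r) ≤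
      ∫⁻ s in Ioc (r / 2) r, chainFnE f (ballMass ρ x s) := by
  have := const_mul_le_setLIntegral (μ := volume) measurableSet_Ioc
    fun s (hs : s ∈ Ioc (r / 2) r) =>
    chainFnE_anti f ((ballMass_mono hρ x hs.2).trans hxv)
  rwa [Real.volume_Ioc, show r - r / 2 = r / 2 by ring, mul_comm] at this

theorem sum_ball_add_sum_compl (S : Finset X) (hS : ∀ z, dist v z ≤ r → z ∈ S) :
    ∑ z ∈ S.filter (fun z => ¬dist v z ≤ r), ρ z + ballMass ρ v r = ∑ z ∈ S, ρ z := by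
  rw [← Finset.sum_filter_add_sum_filter_not S (fun z => dist v z ≤ r), add_comm, ballMass]
  congr 2
  ext z
  simp only [Finset.mem_filter, Finset.mem_univ, true_and]
  exact ⟨fun h => ⟨hS z h, h⟩, fun h => h.2⟩

end BallMass

section LabelledTree

/-! A map `t : X → X × ℝ` encodes a parent map `Prod.fst ∘ t` together with the label
`(t y).2` of the edge from `y` to its parent. -/

variable {X : Type*} {t t' t₁ t₂ : X → X × ℝ}

theorem iterate_eq_of_eqOn {T : Finset X} (hT : ∀ y ∈ T, (t' y).1 ∈ T)
    (h : ∀ y ∈ T, t y = t' y) {x : X} (hx : x ∈ T) (n : ℕ) :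
    (Prod.fst ∘ t)^[n] x = (Prod.fst ∘ t')^[n] x := by
  induction n generalizing x with
  | zero => rfl
  | succ n ih =>
    rw [Function.iterate_succ_apply, Function.iterate_succ_apply, Function.comp_apply,
      Function.comp_apply, h x hx, ih (hT x hx)]

variable [DecidableEq X]

structure IsTreeOn (t : X → X × ℝ) (T : Finset X) (u : X) (w : ℝ) : Prop where
  root_mem : u ∈ T
  apply_eq : ∀ y ∉ T.erase u, t y = (y, 0)
  mapsTo : ∀ y ∈ T, (t y).1 ∈ T
  label_mem : ∀ y ∈ T.erase u, (t y).2 ∈ Ioc 0 w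
  reaches : ∀ y ∈ T, ∃ n, (Prod.fst ∘ t)^[n] y = u

namespace IsTreeOn

variable {T : Finset X} {u : X} {w : ℝ}

theorem apply_root (h : IsTreeOn t T u w) : t u = (u, 0) :=
  h.apply_eq u (T.notMem_erase u)

theorem mono (h : IsTreeOn t T u w) {w' : ℝ} (hw : w ≤ w') : IsTreeOn t T u w' :=
  { h with label_mem := fun y hy => ⟨(h.label_mem y hy).1, (h.label_mem y hy).2.trans hw⟩ }

theorem singleton (u : X) (w : ℝ) : IsTreeOn (fun y => (y, 0)) {u} u w where
  root_mem := Finset.mem_singleton_self u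
  apply_eq _ _ := rfl
  mapsTo _ hy := hy
  label_mem y hy := by simp at hy
  reaches y hy := ⟨0, Finset.mem_singleton.1 hy⟩

end IsTreeOn

/-- The tree `t₁` on `T₁` grafted onto `t₂` at their common root. -/
def glue (T₁ : Finset X) (t₁ t₂ : X → X × ℝ) : X → X × ℝ := T₁.piecewise t₁ t₂

/-- The tree `t` rooted at `v`, hung below `u` by an edge with label `ℓ`. -/
def attach (v u : X) (ℓ : ℝ) (t : X → X × ℝ) : X → X × ℝ := Function.update t v (u, ℓ)

section Glue

variable {T₁ T₂ : Finset X} {u : X} {w : ℝ}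

theorem glue_apply_of_mem_right (h₁ : IsTreeOn t₁ T₁ u w) (h₂ : IsTreeOn t₂ T₂ u w)
    (hT : T₁ ∩ T₂ ⊆ {u}) {y : X} (hy : y ∈ T₂) : glue T₁ t₁ t₂ y = t₂ y := by
  by_cases hy₁ : y ∈ T₁
  · obtain rfl : y = u := Finset.mem_singleton.1 (hT (Finset.mem_inter.2 ⟨hy₁, hy⟩))
    rw [glue, Finset.piecewise_eq_of_mem _ _ _ hy₁, h₁.apply_root, h₂.apply_root]
  · exact Finset.piecewise_eq_of_notMem _ _ _ hy₁

theorem isTreeOn_glue (h₁ : IsTreeOn t₁ T₁ u w) (h₂ : IsTreeOn t₂ T₂ u w)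
    (hT : T₁ ∩ T₂ ⊆ {u}) : IsTreeOn (glue T₁ t₁ t₂) (T₁ ∪ T₂) u w := by
  have left : ∀ y ∈ T₁, glue T₁ t₁ t₂ y = t₁ y := fun y hy => Finset.piecewise_eq_of_mem _ _ _ hy
  have right : ∀ y ∈ T₂, glue T₁ t₁ t₂ y = t₂ y := fun y hy => glue_apply_of_mem_right h₁ h₂ hT hy
  refine ⟨Finset.mem_union_left _ h₁.root_mem, fun y hy => ?_, fun y hy => ?_, fun y hy => ?_,
    fun y hy => ?_⟩
  · have hy₁ : y ∉ T₁.erase u := fun h => hy (Finset.erase_subset_erase u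
      Finset.subset_union_left h)
    by_cases hyT : y ∈ T₁
    · rw [left y hyT, h₁.apply_eq y hy₁]
    · rw [glue, Finset.piecewise_eq_of_notMem _ _ _ hyT, h₂.apply_eq y fun h => hy
        (Finset.erase_subset_erase u Finset.subset_union_right h)]
  · rcases Finset.mem_union.1 hy with hy | hy
    · rw [left y hy]; exact Finset.mem_union_left _ (h₁.mapsTo y hy)
    · rw [right y hy]; exact Finset.mem_union_right _ (h₂.mapsTo y hy)
  · obtain ⟨hyu, hy⟩ := Finset.mem_erase.1 hy
    rcases Finset.mem_union.1 hy with hy | hy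
    · rw [left y hy]; exact h₁.label_mem y (Finset.mem_erase.2 ⟨hyu, hy⟩)
    · rw [right y hy]; exact h₂.label_mem y (Finset.mem_erase.2 ⟨hyu, hy⟩)
  · rcases Finset.mem_union.1 hy with hy | hy
    · obtain ⟨n, hn⟩ := h₁.reaches y hy
      exact ⟨n, by rw [iterate_eq_of_eqOn h₁.mapsTo left hy, hn]⟩
    · obtain ⟨n, hn⟩ := h₂.reaches y hy
      exact ⟨n, by rw [iterate_eq_of_eqOn h₂.mapsTo right hy, hn]⟩

theorem sum_glue [Fintype X] (h₁ : IsTreeOn t₁ T₁ u w) (h₂ : IsTreeOn t₂ T₂ u w)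
    (hT : T₁ ∩ T₂ ⊆ {u}) :
    ∑ y, (glue T₁ t₁ t₂ y).2 = ∑ y, (t₁ y).2 + ∑ y, (t₂ y).2 := by
  rw [← Finset.sum_add_distrib]
  refine Finset.sum_congr rfl fun y _ => ?_
  by_cases hy : y ∈ T₁
  · have : y ∉ T₂.erase u := fun h => (Finset.mem_erase.1 h).1
      (Finset.mem_singleton.1 (hT (Finset.mem_inter.2 ⟨hy, (Finset.mem_erase.1 h).2⟩)))
    rw [glue, Finset.piecewise_eq_of_mem _ _ _ hy, h₂.apply_eq y this, add_zero]
  · rw [glue, Finset.piecewise_eq_of_notMem _ _ _ hy,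
      h₁.apply_eq y fun h => hy (Finset.mem_of_mem_erase h), zero_add]

end Glue

section Attach

variable {D : Finset X} {u v : X} {ℓ w : ℝ}

theorem attach_apply_of_ne {y : X} (hy : y ≠ v) : attach v u ℓ t y = t y :=
  Function.update_of_ne hy _ _

theorem exists_iterate_attach_eq (h : IsTreeOn t D v w) {y : X} (hy : y ∈ D) :
    ∃ m, (Prod.fst ∘ attach v u ℓ t)^[m] y = u := by
  obtain ⟨n, hn⟩ := h.reaches y hy
  induction n generalizing y with
  | zero =>
    subst hn
    exact ⟨1, by simp [attach]⟩
  | succ n ih =>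
    rcases eq_or_ne y v with rfl | hyv
    · exact ⟨1, by simp [attach]⟩
    obtain ⟨m, hm⟩ := ih (h.mapsTo y hy) hn
    refine ⟨m + 1, ?_⟩
    rw [Function.iterate_succ_apply, Function.comp_apply, attach_apply_of_ne hyv, hm]

theorem isTreeOn_attach (h : IsTreeOn t D v w) (hu : u ∉ D) (hℓ : ℓ ∈ Ioc 0 w) :
    IsTreeOn (attach v u ℓ t) (insert u D) u w := by
  have hvD := h.root_mem
  have huv : u ≠ v := fun huv => hu (huv ▸ hvD)
  have hfix : ∀ y ∉ D.erase v, y ≠ v → attach v u ℓ t y = (y, 0) :=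
    fun y hy hyv => (attach_apply_of_ne hyv).trans (h.apply_eq y hy)
  refine ⟨Finset.mem_insert_self u D, fun y hy => ?_, fun y hy => ?_, fun y hy => ?_,
    fun y hy => ?_⟩
  · have hyD : y ∉ D.erase v := fun h' => hy (Finset.mem_erase.2
      ⟨fun hyu => hu (hyu ▸ Finset.mem_of_mem_erase h'), Finset.mem_insert_of_mem
        (Finset.mem_of_mem_erase h')⟩)
    rcases eq_or_ne y v with rfl | hyv
    · exact absurd (Finset.mem_erase.2 ⟨huv.symm, Finset.mem_insert_of_mem hvD⟩) hy
    · exact hfix y hyD hyv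
  · rcases eq_or_ne y v with rfl | hyv
    · simp [attach]
    rw [attach_apply_of_ne hyv]
    rcases Finset.mem_insert.1 hy with rfl | hy
    · rw [h.apply_eq y fun h' => hu (Finset.mem_of_mem_erase h')]
      exact Finset.mem_insert_self _ _
    · exact Finset.mem_insert_of_mem (h.mapsTo y hy)
  · have hyD : y ∈ D := by
      obtain ⟨hyu, hy⟩ := Finset.mem_erase.1 hy
      exact (Finset.mem_insert.1 hy).resolve_left hyu
    rcases eq_or_ne y v with rfl | hyv
    · simpa [attach] using hℓ
    · rw [attach_apply_of_ne hyv]; exact h.label_mem y (Finset.mem_erase.2 ⟨hyv, hyD⟩)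
  · rcases Finset.mem_insert.1 hy with rfl | hy
    · exact ⟨0, rfl⟩
    · exact exists_iterate_attach_eq h hy

theorem sum_attach [Fintype X] (h : IsTreeOn t D v w) :
    ∑ y, (attach v u ℓ t y).2 = ∑ y, (t y).2 + ℓ := by
  have hv : (t v).2 = 0 := by rw [h.apply_root]
  rw [← Finset.add_sum_erase _ _ (Finset.mem_univ v),
    ← Finset.add_sum_erase _ _ (Finset.mem_univ v),
    hv, zero_add, add_comm]
  simp only [attach, Function.update_self]
  congr 1
  exact Finset.sum_congr rfl fun y hy => by rw [Function.update_of_ne (Finset.ne_of_mem_erase hy)]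

end Attach

end LabelledTree

section PathCost

variable {X : Type*} [MetricSpace X] {f : ℝ → ℝ} {t t' t₁ t₂ : X → X × ℝ}

def edgeCost (f : ℝ → ℝ) (t : X → X × ℝ) (y : X) : ℝ :=
  dist y (t y).1 * chainFn f (t y).2

def pathCost (f : ℝ → ℝ) (t : X → X × ℝ) (x : X) (N : ℕ) : ℝ :=
  ∑ n ∈ Finset.range N, edgeCost f t ((Prod.fst ∘ t)^[n] x)

theorem pathCost_nonneg (f : ℝ → ℝ) (t : X → X × ℝ) (x : X) (N : ℕ) : 0 ≤ pathCost f t x N :=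
  Finset.sum_nonneg fun _ _ => mul_nonneg dist_nonneg (chainFn_nonneg f _)

theorem pathCost_succ (t : X → X × ℝ) (x : X) (N : ℕ) :
    pathCost f t x (N + 1) = edgeCost f t x + pathCost f t (t x).1 N := by
  simp only [pathCost, Finset.sum_range_succ', Function.iterate_succ_apply,
    Function.iterate_zero_apply, Function.comp_apply]
  ring

theorem pathCost_zero (t : X → X × ℝ) (x : X) : pathCost f t x 0 = 0 := rfl

theorem pathCost_of_fixed {x : X} (hx : (t x).1 = x) (N : ℕ) : pathCost f t x N = 0 :=
  Finset.sum_eq_zero fun _ _ => by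
    rw [Function.iterate_fixed (f := Prod.fst ∘ t) hx, edgeCost, hx, dist_self, zero_mul]

theorem pathCost_eq_of_eqOn {T : Finset X} (hT : ∀ y ∈ T, (t' y).1 ∈ T)
    (h : ∀ y ∈ T, t y = t' y) {x : X} (hx : x ∈ T) (N : ℕ) :
    pathCost f t x N = pathCost f t' x N := by
  induction N generalizing x with
  | zero => rfl
  | succ N ih => rw [pathCost_succ, pathCost_succ, edgeCost, edgeCost, h x hx, ih (hT x hx)]

variable [DecidableEq X] {T₁ T₂ D : Finset X} {u v : X} {ℓ w : ℝ}

theorem pathCost_glue_of_mem_left (h₁ : IsTreeOn t₁ T₁ u w) {x : X} (hx : x ∈ T₁) (N : ℕ) :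
    pathCost f (glue T₁ t₁ t₂) x N = pathCost f t₁ x N :=
  pathCost_eq_of_eqOn h₁.mapsTo (fun _ hy => Finset.piecewise_eq_of_mem _ _ _ hy) hx N

theorem pathCost_glue_of_mem_right (h₁ : IsTreeOn t₁ T₁ u w) (h₂ : IsTreeOn t₂ T₂ u w)
    (hT : T₁ ∩ T₂ ⊆ {u}) {x : X} (hx : x ∈ T₂) (N : ℕ) :
    pathCost f (glue T₁ t₁ t₂) x N = pathCost f t₂ x N :=
  pathCost_eq_of_eqOn h₂.mapsTo (fun _ hy => glue_apply_of_mem_right h₁ h₂ hT hy) hx N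

/-- A path in `attach v u ℓ t` follows `t` up to `v` and then ends with the edge `v → u`. -/
theorem exists_pathCost_attach_le (h : IsTreeOn t D v w) (hu : u ∉ D) {x : X} (hx : x ∈ D)
    (N : ℕ) : ∃ M, pathCost f (attach v u ℓ t) x N ≤
      pathCost f t x M + dist v u * chainFn f ℓ := by
  have he : 0 ≤ dist v u * chainFn f ℓ := mul_nonneg dist_nonneg (chainFn_nonneg f ℓ)
  induction N generalizing x with
  | zero => exact ⟨0, by simpa [pathCost_zero] using he⟩
  | succ N ih =>
    rw [pathCost_succ]
    rcases eq_or_ne x v with rfl | hxv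
    · refine ⟨0, ?_⟩
      have hux : u ≠ x := fun h' => hu (h' ▸ hx)
      have hu' : (attach x u ℓ t u).1 = u := by
        rw [attach_apply_of_ne hux, h.apply_eq u fun h' => hu (Finset.mem_of_mem_erase h')]
      have hx' : attach x u ℓ t x = (u, ℓ) := Function.update_self _ _ _
      rw [pathCost_of_fixed (by rwa [hx']) N, edgeCost, hx', pathCost_zero]
      simp
    · obtain ⟨M, hM⟩ := ih (h.mapsTo x hx)
      refine ⟨M + 1, ?_⟩
      rw [pathCost_succ, edgeCost, edgeCost, attach_apply_of_ne hxv]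
      linarith

end PathCost

section CostBound

variable {X : Type*} [MetricSpace X] [Fintype X] {f : ℝ → ℝ} {ρ : X → ℝ}

/-- A bound for the cost of a path that starts in a cluster with pieces of radius `r` and whose
labels cost `W` at this level.  One level down the label cost grows by at most `3 h(1/2)` plus a
charge paid by `∫_{r/2}^r`; the constants make these increments telescope, see
`costBound_half_add_le`. -/
def costBound (f : ℝ → ℝ) (ρ : X → ℝ) (r : ℝ) (W : ℝ≥0∞) (x : X) : ℝ≥0∞ :=
  ENNReal.ofReal r * (8 * W + 48 * ENNReal.ofReal (chainFn f (1 / 2))) +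
    16 * ∫⁻ s in Ioc 0 r, chainFnE f (ballMass ρ x s)

theorem costBound_mono (r : ℝ) {W W' : ℝ≥0∞} (hW : W ≤ W') (x : X) :
    costBound f ρ r W x ≤ costBound f ρ r W' x := by
  unfold costBound; gcongr

theorem costBound_half_add_le {r : ℝ} (hr : 0 ≤ r) (W e : ℝ≥0∞) {x : X}
    (he : ENNReal.ofReal (r / 2) * e ≤ ∫⁻ s in Ioc (r / 2) r, chainFnE f (ballMass ρ x s)) :
    costBound f ρ (r / 2) (W + 3 * ENNReal.ofReal (chainFn f (1 / 2)) + e) x +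
        ENNReal.ofReal (4 * r) * (W + 3 * ENNReal.ofReal (chainFn f (1 / 2)) + e) ≤
      costBound f ρ r W x := by
  have hsplit : ∫⁻ s in Ioc 0 r, chainFnE f (ballMass ρ x s) =
      (∫⁻ s in Ioc 0 (r / 2), chainFnE f (ballMass ρ x s)) +
        ∫⁻ s in Ioc (r / 2) r, chainFnE f (ballMass ρ x s) := by
    rw [← lintegral_union measurableSet_Ioc (Ioc_disjoint_Ioc_of_le le_rfl),
      Ioc_union_Ioc_eq_Ioc (by linarith) (by linarith)]
  have hR2 : ENNReal.ofReal r = 2 * ENNReal.ofReal (r / 2) := by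
    rw [← ENNReal.ofReal_ofNat 2, ← ENNReal.ofReal_mul (by norm_num)]; ring_nf
  have hR8 : ENNReal.ofReal (4 * r) = 8 * ENNReal.ofReal (r / 2) := by
    rw [← ENNReal.ofReal_ofNat 8, ← ENNReal.ofReal_mul (by norm_num)]; ring_nf
  rw [costBound, costBound, hR2, hR8, hsplit]
  set H := ENNReal.ofReal (chainFn f (1 / 2))
  set R := ENNReal.ofReal (r / 2)
  set I := ∫⁻ s in Ioc 0 (r / 2), chainFnE f (ballMass ρ x s)
  calc R * (8 * (W + 3 * H + e) + 48 * H) + 16 * I + 8 * R * (W + 3 * H + e)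
      = 2 * R * (8 * W + 48 * H) + 16 * (I + R * e) := by ring
    _ ≤ _ := by gcongr

theorem costBound_half_le {r : ℝ} (hr : 0 ≤ r) (W : ℝ≥0∞) (x : X) :
    costBound f ρ (r / 2) (W + 3 * ENNReal.ofReal (chainFn f (1 / 2))) x ≤
      costBound f ρ r W x :=
  calc costBound f ρ (r / 2) (W + 3 * ENNReal.ofReal (chainFn f (1 / 2))) x
      = costBound f ρ (r / 2) (W + 3 * ENNReal.ofReal (chainFn f (1 / 2)) + 0) x := by
        rw [add_zero]
    _ ≤ _ := le_self_add
    _ ≤ _ := costBound_half_add_le hr W 0 (by simp)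

end CostBound

section Construction

variable {X : Type*} [MetricSpace X] [Fintype X] [DecidableEq X]

/- A cluster `C ⊆ B(u, 4r)` keeps its core `C ∩ B(u, 2r)` as a cluster of radius `r / 2` with the
same root `u`; the rest is cut greedily into pieces `C ∩ B(v, 2r)` around centres `v` of heaviest
`r`-balls, each of which becomes a cluster of radius `r / 2` hung below `u`.  The argument `fuel`
only makes the recursion structural. -/
mutual

def buildCluster (ρ : X → ℝ) : ℕ → Finset X → X → ℝ → ℝ → X → X × ℝ
  | 0, _, _, _, _ => fun y => (y, 0)
  | fuel + 1, C, u, r, w =>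
    if C.card ≤ 1 then fun y => (y, 0) else
    let D := C.filter (dist u · ≤ 2 * r)
    glue D (buildCluster ρ fuel D u (r / 2) (w / 8)) (buildForest ρ fuel (C \ D) u r w)

def buildForest (ρ : X → ℝ) : ℕ → Finset X → X → ℝ → ℝ → X → X × ℝ
  | 0, _, _, _, _ => fun y => (y, 0)
  | fuel + 1, C, u, r, w =>
    if hC : C.Nonempty then
      let v := heaviest ρ r C hC
      let D := C.filter (dist v · ≤ 2 * r)
      let q := pieceWeight ρ r v D
      glue (insert u D) (attach v u (w * q) (buildCluster ρ fuel D v (r / 2) (w * q)))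
        (buildForest ρ fuel (C \ D) u r w)
    else fun y => (y, 0)

end

variable (f : ℝ → ℝ) (ρ : X → ℝ)

structure IsCluster (C : Finset X) (u : X) (r w : ℝ) (t : X → X × ℝ) : Prop where
  isTreeOn : IsTreeOn t C u w
  sum_le : ∑ y, (t y).2 ≤ w
  cost_le : ∀ x ∈ C, ∀ N,
    ENNReal.ofReal (pathCost f t x N) ≤ costBound f ρ r (ENNReal.ofReal (chainFn f w)) x

/-- The labels of a forest are paid for by the mass of the `r`-neighbourhood of `C`, since the
heaviest `r`-balls chosen as centres are disjoint. -/
structure IsForest (C : Finset X) (u : X) (r w : ℝ) (t : X → X × ℝ) : Prop where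
  isTreeOn : IsTreeOn t (insert u C) u w
  sum_le : ∀ S : Finset X, (∀ y ∈ C, ∀ z, dist y z ≤ r → z ∈ S) →
    ∑ y, (t y).2 ≤ w / 4 * (∑ z ∈ S, ρ z + C.card / Fintype.card X)
  cost_le : ∀ x ∈ C, ∀ N,
    ENNReal.ofReal (pathCost f t x N) ≤ costBound f ρ r (ENNReal.ofReal (chainFn f w)) x

variable {f ρ}

theorem isCluster_of_card_le_one {C : Finset X} {u : X} (hu : u ∈ C) (hC : C.card ≤ 1) (r : ℝ)
    {w : ℝ} (hw : 0 ≤ w) : IsCluster f ρ C u r w fun y => (y, 0) := by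
  obtain rfl : C = {u} :=
    Finset.eq_singleton_iff_unique_mem.2 ⟨hu, fun y hy => Finset.card_le_one.1 hC y hy u hu⟩
  refine ⟨IsTreeOn.singleton u w, by simpa using hw, fun x _ N => ?_⟩
  rw [pathCost_of_fixed rfl, ENNReal.ofReal_zero]
  exact zero_le

theorem isForest_empty (hρ : ∀ y, 0 ≤ ρ y) (u : X) (r : ℝ) {w : ℝ} (hw : 0 ≤ w) :
    IsForest f ρ ∅ u r w fun y => (y, 0) where
  isTreeOn := IsTreeOn.singleton u w
  sum_le S _ := by
    simpa using mul_nonneg (by positivity) (Finset.sum_nonneg fun z _ => hρ z)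
  cost_le x hx := absurd hx (Finset.notMem_empty x)

end Construction

theorem card_sdiff_add_le {X : Type*} [DecidableEq X] {C D : Finset X} {n fuel : ℕ}
    (hDC : D ⊆ C) (hD : D.Nonempty) (hfuel : C.card + n ≤ fuel + 1) : (C \ D).card + n ≤ fuel := by
  have := Finset.card_sdiff_add_card_eq_card hDC
  have := hD.card_pos
  omega

section Separation

variable {X : Type*} [MetricSpace X]

/-- Once `r` has been halved `n` times no two points lie within `4r`, so a part of diameter at
most `4r` with two points forces `n ≥ 1`; this bounds the recursion depth. -/
theorem card_add_pred_le {C D : Finset X} {r : ℝ} {n fuel : ℕ}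
    (hsep : ∀ a b : X, a ≠ b → 4 * r < 2 ^ n * dist a b) (hDC : D ⊆ C)
    (hD : ∀ a ∈ D, ∀ b ∈ D, dist a b ≤ 4 * r) (hfuel : C.card + n ≤ fuel + 1) :
    D.card + (n - 1) ≤ fuel ∨ D.card ≤ 1 := by
  by_contra! h
  obtain ⟨a, ha, b, hb, hab⟩ := Finset.one_lt_card.1 h.2
  have hn : n ≠ 0 := by
    rintro rfl
    linarith [hsep a b hab, hD a ha b hb]
  have := Finset.card_le_card hDC
  omega

theorem separated_half {r : ℝ} (hr : 0 ≤ r) {n : ℕ}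
    (hsep : ∀ a b : X, a ≠ b → 4 * r < 2 ^ n * dist a b) :
    ∀ a b : X, a ≠ b → 4 * (r / 2) < 2 ^ (n - 1) * dist a b := by
  intro a b hab
  have h := hsep a b hab
  rcases n with _ | n
  · linarith [dist_nonneg (x := a) (y := b)]
  · rw [pow_succ] at h
    simp only [Nat.add_sub_cancel]
    linarith

theorem dist_le_of_mem_filter {C : Finset X} {c : X} {r : ℝ} :
    ∀ a ∈ C.filter (dist c · ≤ 2 * r), ∀ b ∈ C.filter (dist c · ≤ 2 * r), dist a b ≤ 4 * r :=
  fun a ha b hb => by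
    linarith [dist_triangle_left a b c, (Finset.mem_filter.1 ha).2, (Finset.mem_filter.1 hb).2]

theorem lt_dist_of_notMem_filter {C : Finset X} {v y z : X} {r : ℝ} (hy : y ∈ C)
    (hyD : y ∉ C.filter (dist v · ≤ 2 * r)) (hz : dist y z ≤ r) : r < dist v z := by
  by_contra! hvz
  exact hyD (Finset.mem_filter.2 ⟨hy, by linarith [dist_triangle v z y, dist_comm y z]⟩)

end Separation

section Steps

variable {X : Type*} [MetricSpace X] [Fintype X] [DecidableEq X] {f : ℝ → ℝ} {ρ : X → ℝ}
  {C D : Finset X} {u v : X} {q r w : ℝ} {t₁ t₂ : X → X × ℝ}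

theorem isCluster_glue (hf : IsChainingDensity f) (hρ : IsProbOn ρ) (hr : 0 ≤ r) (hw : 0 < w)
    (hDC : D ⊆ C) (h₁ : IsCluster f ρ D u (r / 2) (w / 8) t₁)
    (h₂ : IsForest f ρ (C \ D) u r w t₂) : IsCluster f ρ C u r w (glue D t₁ t₂) := by
  have huD := h₁.isTreeOn.root_mem
  have hT : D ∩ insert u (C \ D) ⊆ {u} := fun y hy => by
    simp only [Finset.mem_inter, Finset.mem_insert, Finset.mem_sdiff] at hy
    simp only [Finset.mem_singleton]; tauto
  have hunion : D ∪ insert u (C \ D) = C := by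
    rw [Finset.union_insert, Finset.union_sdiff_of_subset hDC, Finset.insert_eq_of_mem (hDC huD)]
  have htree₁ := h₁.isTreeOn.mono (by linarith : w / 8 ≤ w)
  refine ⟨hunion ▸ isTreeOn_glue htree₁ h₂.isTreeOn hT, ?_, fun x hx N => ?_⟩
  · have hrest := h₂.sum_le Finset.univ fun _ _ z _ => Finset.mem_univ z
    have hcard : ((C \ D).card : ℝ) / Fintype.card X ≤ 1 :=
      div_le_one_of_le₀ (by exact_mod_cast Finset.card_le_univ _) (Nat.cast_nonneg _)
    rw [sum_glue htree₁ h₂.isTreeOn hT]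
    rw [hρ.2] at hrest
    nlinarith [h₁.sum_le]
  by_cases hxD : x ∈ D
  · rw [pathCost_glue_of_mem_left h₁.isTreeOn hxD]
    calc ENNReal.ofReal (pathCost f t₁ x N)
        ≤ costBound f ρ (r / 2) (ENNReal.ofReal (chainFn f (w / 8))) x := h₁.cost_le x hxD N
      _ ≤ costBound f ρ (r / 2)
          (ENNReal.ofReal (chainFn f w) + 3 * ENNReal.ofReal (chainFn f (1 / 2))) x :=
        costBound_mono _ (hf.ofReal_chainFn_div_eight_le hw) x
      _ ≤ _ := costBound_half_le hr _ x
  · have hx' : x ∈ C \ D := Finset.mem_sdiff.2 ⟨hx, hxD⟩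
    rw [pathCost_glue_of_mem_right htree₁ h₂.isTreeOn hT (Finset.mem_insert_of_mem hx')]
    exact h₂.cost_le x hx' N

theorem IsCluster.cost_attach_le (hf : IsChainingDensity f) (hρ : ∀ y, 0 ≤ ρ y) (hr : 0 ≤ r)
    (hw : 0 < w) (hq : 0 < q) (hmq : ballMass ρ v r ≤ 8 * q) (hvu : dist v u ≤ 4 * r)
    (h : IsCluster f ρ D v (r / 2) (w * q) t₁) (hu : u ∉ D) {x : X} (hxD : x ∈ D)
    (hxv : ballMass ρ x r ≤ ballMass ρ v r) (N : ℕ) :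
    ENNReal.ofReal (pathCost f (attach v u (w * q) t₁) x N) ≤
      costBound f ρ r (ENNReal.ofReal (chainFn f w)) x := by
  obtain ⟨M, hM⟩ := exists_pathCost_attach_le (ℓ := w * q) (f := f) h.isTreeOn hu hxD N
  set V := ENNReal.ofReal (chainFn f w) + 3 * ENNReal.ofReal (chainFn f (1 / 2)) +
    chainFnE f (ballMass ρ v r)
  have hlabel : ENNReal.ofReal (chainFn f (w * q)) ≤ V := by
    calc ENNReal.ofReal (chainFn f (w * q))
        ≤ ENNReal.ofReal (chainFn f w) + ENNReal.ofReal (chainFn f q) :=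
          hf.ofReal_chainFn_mul_le hw hq
      _ ≤ ENNReal.ofReal (chainFn f w) +
          (3 * ENNReal.ofReal (chainFn f (1 / 2)) + chainFnE f (ballMass ρ v r)) := by
          gcongr
          exact hf.ofReal_chainFn_le hq (ballMass_nonneg hρ v r) hmq
      _ = V := (add_assoc _ _ _).symm
  calc ENNReal.ofReal (pathCost f (attach v u (w * q) t₁) x N)
      ≤ ENNReal.ofReal (pathCost f t₁ x M) +
          ENNReal.ofReal (dist v u) * ENNReal.ofReal (chainFn f (w * q)) := by
        rw [← ENNReal.ofReal_mul dist_nonneg, ← ENNReal.ofReal_add (pathCost_nonneg _ _ _ _)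
          (mul_nonneg dist_nonneg (chainFn_nonneg _ _))]
        exact ENNReal.ofReal_le_ofReal hM
    _ ≤ costBound f ρ (r / 2) V x + ENNReal.ofReal (4 * r) * V := by
        gcongr
        exact (h.cost_le x hxD M).trans (costBound_mono _ hlabel x)
    _ ≤ _ := costBound_half_add_le hr _ _ (ofReal_half_mul_chainFnE_le hρ hxv)

/-- The ball `B(v, r)` pays for the piece around `v`; the rest of `C` keeps away from it. -/
theorem IsForest.sum_add_piece_le (h₂ : IsForest f ρ (C \ D) u r w t₂) (hvC : v ∈ C)
    (hD : D = C.filter (dist v · ≤ 2 * r)) (h₁ : ∑ y, (t₁ y).2 ≤ w * pieceWeight ρ r v D)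
    {S : Finset X} (hS : ∀ y ∈ C, ∀ z, dist y z ≤ r → z ∈ S) :
    ∑ y, (t₁ y).2 + w * pieceWeight ρ r v D + ∑ y, (t₂ y).2 ≤
      w / 4 * (∑ z ∈ S, ρ z + C.card / Fintype.card X) := by
  have hS' : ∀ y ∈ C \ D, ∀ z, dist y z ≤ r → z ∈ S.filter (fun z => ¬dist v z ≤ r) :=
    fun y hy z hz => Finset.mem_filter.2 ⟨hS y (Finset.mem_sdiff.1 hy).1 z hz,
      not_le.2 (lt_dist_of_notMem_filter (Finset.mem_sdiff.1 hy).1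
        (hD ▸ (Finset.mem_sdiff.1 hy).2) hz)⟩
  have hmass := sum_ball_add_sum_compl (ρ := ρ) S fun z hz => hS v hvC z hz
  have hcard : ((C \ D).card : ℝ) + D.card = C.card := by
    exact_mod_cast Finset.card_sdiff_add_card_eq_card (hD ▸ Finset.filter_subset _ C)
  have := h₂.sum_le _ hS'
  rw [← hmass, ← hcard, add_div]
  simp only [pieceWeight] at h₁ ⊢
  linarith

theorem isForest_glue_attach (hf : IsChainingDensity f) (hρ : IsProbOn ρ) (hr : 0 ≤ r)
    (hw : 0 < w) (huC : u ∉ C) (hC : ∀ y ∈ C, dist u y ≤ 4 * r) (hvC : v ∈ C)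
    (hv : ∀ y ∈ C, ballMass ρ y r ≤ ballMass ρ v r) (hD : D = C.filter (dist v · ≤ 2 * r))
    (h₁ : IsCluster f ρ D v (r / 2) (w * pieceWeight ρ r v D) t₁)
    (h₂ : IsForest f ρ (C \ D) u r w t₂) :
    IsForest f ρ C u r w
      (glue (insert u D) (attach v u (w * pieceWeight ρ r v D) t₁) t₂) := by
  set q := pieceWeight ρ r v D
  have hvD : v ∈ D := h₁.isTreeOn.root_mem
  have hDC : D ⊆ C := hD ▸ Finset.filter_subset _ C
  have huD : u ∉ D := fun h => huC (hDC h)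
  have hq0 : 0 < q := pieceWeight_pos hρ.1 ⟨v, hvD⟩
  have hwq : w * q ∈ Ioc 0 w :=
    ⟨mul_pos hw hq0, mul_le_of_le_one_right hw.le (pieceWeight_le_one hρ D)⟩
  have hA := isTreeOn_attach (h₁.isTreeOn.mono hwq.2) huD hwq
  have hT : insert u D ∩ insert u (C \ D) ⊆ {u} := fun y hy => by
    simp only [Finset.mem_inter, Finset.mem_insert, Finset.mem_sdiff] at hy
    simp only [Finset.mem_singleton]; tauto
  have hunion : insert u D ∪ insert u (C \ D) = insert u C := by
    rw [Finset.insert_union, Finset.union_insert, Finset.insert_idem,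
      Finset.union_sdiff_of_subset hDC]
  refine ⟨hunion ▸ isTreeOn_glue hA h₂.isTreeOn hT, fun S hS => ?_, fun x hx N => ?_⟩
  · rw [sum_glue hA h₂.isTreeOn hT, sum_attach h₁.isTreeOn]
    exact h₂.sum_add_piece_le hvC hD h₁.sum_le hS
  by_cases hxD : x ∈ D
  · rw [pathCost_glue_of_mem_left hA (Finset.mem_insert_of_mem hxD)]
    exact h₁.cost_attach_le hf hρ.1 hr hw hq0 (ballMass_le_pieceWeight D)
      (dist_comm v u ▸ hC v hvC) huD hxD (hv x hx) N
  · have hx' : x ∈ C \ D := Finset.mem_sdiff.2 ⟨hx, hxD⟩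
    rw [pathCost_glue_of_mem_right hA h₂.isTreeOn hT (Finset.mem_insert_of_mem hx')]
    exact h₂.cost_le x hx' N

end Steps

section Induction

variable {X : Type*} [MetricSpace X] [Fintype X] [DecidableEq X]

variable (f : ℝ → ℝ) (ρ : X → ℝ) in
def BuildClusterCorrect (fuel : ℕ) : Prop :=
  ∀ (C : Finset X) (u : X) (r w : ℝ) (n : ℕ), 0 ≤ r → 0 < w →
    (∀ a b : X, a ≠ b → 4 * r < 2 ^ n * dist a b) → u ∈ C → (∀ y ∈ C, dist u y ≤ 4 * r) →
    C.card + n ≤ fuel ∨ C.card ≤ 1 → IsCluster f ρ C u r w (buildCluster ρ fuel C u r w)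

variable (f : ℝ → ℝ) (ρ : X → ℝ) in
def BuildForestCorrect (fuel : ℕ) : Prop :=
  ∀ (C : Finset X) (u : X) (r w : ℝ) (n : ℕ), 0 ≤ r → 0 < w →
    (∀ a b : X, a ≠ b → 4 * r < 2 ^ n * dist a b) → u ∉ C → (∀ y ∈ C, dist u y ≤ 4 * r) →
    C.card + n ≤ fuel ∨ C = ∅ → IsForest f ρ C u r w (buildForest ρ fuel C u r w)

variable {f : ℝ → ℝ} {ρ : X → ℝ} {fuel : ℕ}

theorem buildClusterCorrect_zero : BuildClusterCorrect f ρ 0 :=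
  fun C u r _ _ _ hw _ hu _ hfuel => isCluster_of_card_le_one hu
    (hfuel.elim (fun h => by have := Finset.card_pos.2 ⟨u, hu⟩; omega) id) r hw.le

theorem buildForestCorrect_zero (hρ : ∀ y, 0 ≤ ρ y) : BuildForestCorrect f ρ 0 := by
  intro C u r _ _ _ hw _ _ _ hfuel
  obtain rfl : C = ∅ := hfuel.elim (fun h => Finset.card_eq_zero.1 (by omega)) id
  exact isForest_empty hρ u r hw.le

theorem buildClusterCorrect_succ (hf : IsChainingDensity f) (hρ : IsProbOn ρ)
    (hC : BuildClusterCorrect f ρ fuel) (hF : BuildForestCorrect f ρ fuel) :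
    BuildClusterCorrect f ρ (fuel + 1) := by
  intro C u r w n hr hw hsep hu hCu hfuel
  by_cases hcard : C.card ≤ 1
  · rw [buildCluster, if_pos hcard]
    exact isCluster_of_card_le_one hu hcard r hw.le
  rw [buildCluster, if_neg hcard]
  have hfuel := hfuel.resolve_right hcard
  set D := C.filter (dist u · ≤ 2 * r)
  have huD : u ∈ D := Finset.mem_filter.2 ⟨hu, by simp [hr]⟩
  have hDC : D ⊆ C := Finset.filter_subset _ C
  exact isCluster_glue hf hρ hr hw hDC
    (hC D u (r / 2) (w / 8) (n - 1) (by linarith) (by linarith) (separated_half hr hsep) huD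
      (fun y hy => by linarith [(Finset.mem_filter.1 hy).2])
      (card_add_pred_le hsep hDC dist_le_of_mem_filter hfuel))
    (hF (C \ D) u r w n hr hw hsep (fun h => (Finset.mem_sdiff.1 h).2 huD)
      (fun y hy => hCu y (Finset.mem_sdiff.1 hy).1) (Or.inl (card_sdiff_add_le hDC ⟨u, huD⟩ hfuel)))

theorem buildForestCorrect_succ (hf : IsChainingDensity f) (hρ : IsProbOn ρ)
    (hC : BuildClusterCorrect f ρ fuel) (hF : BuildForestCorrect f ρ fuel) :
    BuildForestCorrect f ρ (fuel + 1) := by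
  intro C u r w n hr hw hsep hu hCu hfuel
  by_cases hne : C.Nonempty
  swap
  · obtain rfl := Finset.not_nonempty_iff_eq_empty.1 hne
    rw [buildForest, dif_neg hne]
    exact isForest_empty hρ.1 u r hw.le
  rw [buildForest, dif_pos hne]
  have hfuel := hfuel.resolve_right hne.ne_empty
  set v := heaviest ρ r C hne
  set D := C.filter (dist v · ≤ 2 * r)
  have hvC : v ∈ C := heaviest_mem ρ r hne
  have hvD : v ∈ D := Finset.mem_filter.2 ⟨hvC, by simp [hr]⟩
  have hDC : D ⊆ C := Finset.filter_subset _ C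
  exact isForest_glue_attach hf hρ hr hw hu hCu hvC (ballMass_le_heaviest ρ r hne) rfl
    (hC D v (r / 2) _ (n - 1) (by linarith) (mul_pos hw (pieceWeight_pos hρ.1 ⟨v, hvD⟩))
      (separated_half hr hsep) hvD (fun y hy => by linarith [(Finset.mem_filter.1 hy).2])
      (card_add_pred_le hsep hDC dist_le_of_mem_filter hfuel))
    (hF (C \ D) u r w n hr hw hsep (fun h => hu (Finset.mem_sdiff.1 h).1)
      (fun y hy => hCu y (Finset.mem_sdiff.1 hy).1) (Or.inl (card_sdiff_add_le hDC ⟨v, hvD⟩ hfuel)))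

theorem buildCorrect (hf : IsChainingDensity f) (hρ : IsProbOn ρ) (fuel : ℕ) :
    BuildClusterCorrect f ρ fuel ∧ BuildForestCorrect f ρ fuel := by
  induction fuel with
  | zero => exact ⟨buildClusterCorrect_zero, buildForestCorrect_zero hρ.1⟩
  | succ fuel ih =>
    exact ⟨buildClusterCorrect_succ hf hρ ih.1 ih.2, buildForestCorrect_succ hf hρ ih.1 ih.2⟩

end Induction

section Diameter

variable {X : Type*} [MetricSpace X] [Fintype X]

theorem dist_le_fdiam (x y : X) : dist x y ≤ fdiam X :=
  Metric.dist_le_diam_of_mem Set.finite_univ.isBounded (mem_univ x) (mem_univ y)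

theorem exists_dist_eq_fdiam [Nonempty X] : ∃ a b : X, dist a b = fdiam X := by
  obtain ⟨p, hp⟩ := Finite.exists_max fun p : X × X => dist p.1 p.2
  exact ⟨p.1, p.2, le_antisymm (dist_le_fdiam _ _)
    (Metric.diam_le_of_forall_dist_le dist_nonneg fun x _ y _ => hp (x, y))⟩

theorem exists_four_mul_lt_two_pow_mul_dist (r : ℝ) :
    ∃ n : ℕ, ∀ a b : X, a ≠ b → 4 * r < 2 ^ n * dist a b := by
  by_cases hX : ∃ a b : X, a ≠ b
  swap
  · push Not at hX; exact ⟨0, fun a b hab => absurd (hX a b) hab⟩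
  have : Nonempty {p : X × X // p.1 ≠ p.2} := let ⟨a, b, hab⟩ := hX; ⟨⟨(a, b), hab⟩⟩
  obtain ⟨p, hp⟩ := Finite.exists_min fun p : {p : X × X // p.1 ≠ p.2} => dist p.1.1 p.1.2
  have hδ : 0 < dist p.1.1 p.1.2 := dist_pos.2 p.2
  obtain ⟨n, hn⟩ := pow_unbounded_of_one_lt (4 * r / dist p.1.1 p.1.2) one_lt_two
  refine ⟨n, fun a b hab => ?_⟩
  calc 4 * r = 4 * r / dist p.1.1 p.1.2 * dist p.1.1 p.1.2 := by field_simp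
    _ < 2 ^ n * dist p.1.1 p.1.2 := by gcongr
    _ ≤ 2 ^ n * dist a b := by gcongr; exact hp ⟨(a, b), hab⟩

/-- Balls of radius `< dist a b / 2` around `a` and around `b` are disjoint. -/
theorem exists_ballMass_le_half {ρ : X → ℝ} (hρ : IsProbOn ρ) (a b : X) :
    ∃ z : X, ∀ r < dist a b / 2, ballMass ρ z r ≤ 1 / 2 := by
  classical
  by_cases ha : ∀ r < dist a b / 2, ballMass ρ a r ≤ 1 / 2
  · exact ⟨a, ha⟩
  push Not at ha
  obtain ⟨r₁, hr₁, hm₁⟩ := ha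
  refine ⟨b, fun r hr => ?_⟩
  have hdisj : Disjoint (Finset.univ.filter (dist a · ≤ max r r₁))
      (Finset.univ.filter (dist b · ≤ max r r₁)) := by
    refine Finset.disjoint_filter.2 fun y _ hay hby => ?_
    have := max_lt hr hr₁
    linarith [dist_triangle_right a b y]
  have hsum : ballMass ρ a (max r r₁) + ballMass ρ b (max r r₁) ≤ 1 := by
    rw [ballMass, ballMass, ← Finset.sum_union hdisj, ← hρ.2]
    exact Finset.sum_le_sum_of_subset_of_nonneg (Finset.subset_univ _) fun y _ _ => hρ.1 y
  linarith [ballMass_mono hρ.1 a (le_max_right r r₁), ballMass_mono hρ.1 b (le_max_left r r₁)]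

theorem ofReal_mul_chainFn_half_le_Hint (f : ℝ → ℝ) {ρ : X → ℝ} {z : X} {d : ℝ}
    (hz : ∀ r < d / 2, ballMass ρ z r ≤ 1 / 2) :
    ENNReal.ofReal (d * chainFn f (1 / 2)) ≤ 2 * Hint f ρ z := by
  have h := const_mul_le_setLIntegral (μ := volume) measurableSet_Ioo
    fun r (hr : r ∈ Ioo 0 (d / 2)) => ofReal_chainFn_le_chainFnE f (hz r hr.2)
  rw [Real.volume_Ioo, sub_zero] at h
  calc ENNReal.ofReal (d * chainFn f (1 / 2))
      = 2 * (ENNReal.ofReal (chainFn f (1 / 2)) * ENNReal.ofReal (d / 2)) := by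
        rw [← ENNReal.ofReal_mul (chainFn_nonneg f _), ← ENNReal.ofReal_ofNat 2,
          ← ENNReal.ofReal_mul (by norm_num)]
        ring_nf
    _ ≤ 2 * Hint f ρ z := by
        gcongr
        exact h.trans (lintegral_mono_set Ioo_subset_Ioi_self)

theorem costBound_le_iSup_Hint [Nontrivial X] {f : ℝ → ℝ} {ρ : X → ℝ} (hρ : IsProbOn ρ) (x : X) :
    costBound f ρ (fdiam X / 2) (ENNReal.ofReal (chainFn f (1 / 2))) x ≤ 72 * ⨆ y, Hint f ρ y := by
  obtain ⟨a, b, hab⟩ := exists_dist_eq_fdiam (X := X)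
  obtain ⟨z, hz⟩ := exists_ballMass_le_half hρ a b
  have hΔ : 0 ≤ fdiam X := Metric.diam_nonneg
  have hdiam := ofReal_mul_chainFn_half_le_Hint f (hab ▸ hz)
  calc costBound f ρ (fdiam X / 2) (ENNReal.ofReal (chainFn f (1 / 2))) x
      = 28 * ENNReal.ofReal (fdiam X * chainFn f (1 / 2)) +
          16 * ∫⁻ s in Ioc 0 (fdiam X / 2), chainFnE f (ballMass ρ x s) := by
        have h2 : ENNReal.ofReal (fdiam X) = 2 * ENNReal.ofReal (fdiam X / 2) := by
          rw [← ENNReal.ofReal_ofNat 2, ← ENNReal.ofReal_mul (by norm_num)]; ring_nf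
        rw [costBound, ENNReal.ofReal_mul hΔ, h2]
        ring
    _ ≤ 28 * (2 * ⨆ y, Hint f ρ y) + 16 * ⨆ y, Hint f ρ y := by
        gcongr
        · exact hdiam.trans (by gcongr; exact le_iSup (Hint f ρ) z)
        · exact (setLIntegral_Ioc_le_Hint f ρ x _).trans (le_iSup (Hint f ρ) x)
    _ = 72 * ⨆ y, Hint f ρ y := by ring

end Diameter

section Assembly

variable {X : Type*} [MetricSpace X] [Fintype X] [DecidableEq X] {t : X → X × ℝ} {u : X}

def IsTreeOn.toChainingTree (h : IsTreeOn t Finset.univ u (1 / 2))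
    (hsum : ∑ y, (t y).2 ≤ 1 / 2) : ChainingTree X where
  root := u
  parent y := (t y).1
  prob y := (t y).2
  parent_root := by rw [h.apply_root]
  reaches_root y := h.reaches y (Finset.mem_univ y)
  prob_mem y hy := h.label_mem y (Finset.mem_erase.2 ⟨hy, Finset.mem_univ y⟩)
  prob_sum := by
    have hu : (t u).2 = 0 := by rw [h.apply_root]
    let := Classical.decEq X
    rwa [edgeLabelSum, Finset.sum_erase (f := fun y => (t y).2) _ hu]

theorem IsTreeOn.pathLen_toChainingTree (f : ℝ → ℝ) (h : IsTreeOn t Finset.univ u (1 / 2))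
    (hsum : ∑ y, (t y).2 ≤ 1 / 2) (x : X) :
    pathLen f (h.toChainingTree hsum) x = pathCost f t x (Fintype.card X) := rfl

end Assembly

theorem ofReal_ctVal_le {X : Type*} [MetricSpace X] [Fintype X] [Nonempty X] {f : ℝ → ℝ}
    (C : ChainingTree X) {B : ℝ≥0∞} (h : ∀ x, ENNReal.ofReal (pathLen f C x) ≤ B) :
    ENNReal.ofReal (ctVal f C) ≤ B := by
  obtain ⟨x, hx⟩ := Finite.exists_max (pathLen f C)
  exact (ENNReal.ofReal_le_ofReal (ciSup_le hx)).trans (h x)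

/-- there is a universal constant `c > 0` such that for every finite
metric space `X` with at least two points, every chaining functional `h` of
log-concave type and every probability measure `ρ` on `X`, there is a chaining
tree `C` for `X` with `val_h(C) ≤ c·max_{x∈X} ∫₀^∞ h(ρ(B(x,r))) dr`. -/
theorem stmt12 :
    ∃ c : ℝ, 0 < c ∧
      ∀ (X : Type) [MetricSpace X] [Fintype X] [Nontrivial X],
      ∀ (f : ℝ → ℝ), IsChainingDensity f →
      ∀ (ρ : X → ℝ), IsProbOn ρ →
      ∃ C : ChainingTree X,
        ENNReal.ofReal (ctVal f C) ≤ ENNReal.ofReal c * (⨆ x : X, Hint f ρ x) := by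
  refine ⟨72, by norm_num, fun X _ _ _ f hf ρ hρ => ?_⟩
  classical
  obtain ⟨u⟩ := (inferInstance : Nonempty X)
  obtain ⟨n, hn⟩ := exists_four_mul_lt_two_pow_mul_dist (X := X) (fdiam X / 2)
  have hC := (buildCorrect hf hρ (Fintype.card X + n)).1
    Finset.univ u (fdiam X / 2) (1 / 2) n (div_nonneg Metric.diam_nonneg zero_le_two)
    (by norm_num) hn (Finset.mem_univ u)
    (fun y _ => by linarith [dist_le_fdiam u y, dist_nonneg (x := u) (y := y)]) (Or.inl (by simp))
  refine ⟨hC.isTreeOn.toChainingTree hC.sum_le, ofReal_ctVal_le _ fun x => ?_⟩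
  rw [IsTreeOn.pathLen_toChainingTree, ENNReal.ofReal_ofNat]
  exact (hC.cost_le x (Finset.mem_univ x) _).trans (costBound_le_iSup_Hint hρ x)
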